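/- arXiv:2305.17293 — 5 statements merged into one kernel-verified Lean document; each statement's English description precedes it below -/
import Mathlib

section
/- Let ℓ¹ denote the space lp (fun _ : ℕ => ℂ) 1 of absolutely summable complex sequences. The formula (g a)(n) = a(n)/(n+1) defines an injective ℂ-linear map g : ℓ¹ → ℓ¹ with ‖g a‖ ≤ ‖a‖ for all a. Let x ∈ ℓ¹ be the sequence x(n) = 1/n!. Then for every continuous linear functional x⋆ : ℓ¹ → ℂ with ‖x⋆‖ ≤ 1 and x⋆(x) = ‖x‖, there is no continuous linear functional u : ℓ¹ → ℂ with ‖u‖ ≤ 1 and u ∘ g = x⋆. -/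
/-! The map `g` damps every coordinate by `1 / (n + 1)`, and strictly so from `n = 1` on, so
`‖g x‖ < ‖x‖` for `x = (1 / n!)`. An extension `u` of `x⋆` along `g` with `‖u‖ ≤ 1` would give
`‖x‖ = ‖x⋆ x‖ = ‖u (g x)‖ ≤ ‖g x‖`. -/

namespace lp

variable {ι : Type*} {E : ι → Type*} [∀ i, NormedAddCommGroup (E i)]

theorem norm_eq_tsum_norm_of_one (a : lp E 1) : ‖a‖ = ∑' i, ‖a i‖ := by
  simpa using norm_eq_tsum_rpow (p := 1) (by norm_num) a

theorem summable_norm_of_one (a : lp E 1) : Summable fun i => ‖a i‖ := by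
  simpa using (memℓp_gen_iff (p := 1) (by norm_num)).1 (lp.memℓp a)

theorem norm_le_norm_of_one {a b : lp E 1} (h : ∀ i, ‖b i‖ ≤ ‖a i‖) : ‖b‖ ≤ ‖a‖ := by
  rw [norm_eq_tsum_norm_of_one, norm_eq_tsum_norm_of_one]
  exact (summable_norm_of_one b).tsum_le_tsum h (summable_norm_of_one a)

theorem norm_lt_norm_of_one {a b : lp E 1} (h : ∀ i, ‖b i‖ ≤ ‖a i‖) {i : ι}
    (hi : ‖b i‖ < ‖a i‖) : ‖b‖ < ‖a‖ := by
  rw [norm_eq_tsum_norm_of_one, norm_eq_tsum_norm_of_one]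
  exact (summable_norm_of_one b).tsum_lt_tsum h hi (summable_norm_of_one a)

end lp

theorem Complex.norm_div_natCast_succ_le (z : ℂ) (n : ℕ) : ‖z / (n + 1)‖ ≤ ‖z‖ := by
  rw [norm_div]
  exact div_le_self (norm_nonneg z) (by norm_cast; omega)

/-- In the category of operator spaces and completely contractive maps, ℂ is not
injective: the contractive injective linear map `g : ℓ¹ → ℓ¹`, `(g a) n = a n / (n+1)`,
and a norm-attaining functional `x⋆` at the sequence `x n = 1/n!` witness the failure
of the extension property. -/
theorem complex_not_injective_opsp
    (g : lp (fun _ : ℕ => ℂ) 1 →ₗ[ℂ] lp (fun _ : ℕ => ℂ) 1)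
    (hg : ∀ (a : lp (fun _ : ℕ => ℂ) 1) (n : ℕ), (g a : ∀ _ : ℕ, ℂ) n = a n / (n + 1)) :
    Function.Injective g ∧ (∀ a, ‖g a‖ ≤ ‖a‖) ∧
      ∀ x : lp (fun _ : ℕ => ℂ) 1, (∀ n : ℕ, (x : ∀ _ : ℕ, ℂ) n = 1 / (n.factorial : ℂ)) →
        ∀ xstar : lp (fun _ : ℕ => ℂ) 1 →L[ℂ] ℂ, ‖xstar‖ ≤ 1 → xstar x = (‖x‖ : ℂ) →
          ¬ ∃ u : lp (fun _ : ℕ => ℂ) 1 →L[ℂ] ℂ, ‖u‖ ≤ 1 ∧ ∀ a, u (g a) = xstar a := by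
  have hdamp : ∀ a n, ‖g a n‖ ≤ ‖a n‖ := fun a n => hg a n ▸ (a n).norm_div_natCast_succ_le n
  refine ⟨fun a b hab => lp.ext (funext fun n => ?_), fun a => lp.norm_le_norm_of_one (hdamp a), ?_⟩
  · have hn := congrArg (fun c : lp (fun _ : ℕ => ℂ) 1 => c n) hab
    simp only [hg] at hn
    exact (div_left_inj' (Nat.cast_add_one_ne_zero n)).1 hn
  rintro x hx xstar - hnorm ⟨u, hu, hux⟩
  have hgx : ‖g x‖ < ‖x‖ := lp.norm_lt_norm_of_one (hdamp x) (i := 1) (by norm_num [hg, hx])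
  have hxgx : ‖x‖ ≤ ‖g x‖ :=
    calc ‖x‖ = ‖xstar x‖ := by rw [hnorm, Complex.norm_real, norm_norm]
      _ = ‖u (g x)‖ := by rw [hux]
      _ ≤ ‖g x‖ := (u.le_of_opNorm_le hu _).trans_eq (one_mul _)
  exact (hgx.trans_le hxgx).false
end

section
/- Let X be a nonzero complex normed space and let ℓ¹ = lp (fun _ : ℕ => ℂ) 1. Then there exist an injective ℂ-linear map g : ℓ¹ → ℓ¹ with ‖g a‖ ≤ ‖a‖ for all a (explicitly, (g a)(n) = a(n)/(n+1)) and a continuous ℂ-linear map T : ℓ¹ → X with ‖T‖ ≤ 1 such that no continuous ℂ-linear map S : ℓ¹ → X with ‖S‖ ≤ 1 satisfies S ∘ g = T. -/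
/-!
Take `T a = a 1 • x` for a unit vector `x`. The unit vector `e₁ = lp.single 1 1 1` is an
eigenvector of `g` with eigenvalue `1/2`, so any `S` with `S ∘ g = T` has `S e₁ = 2 • x`,
whence `‖S‖ ≥ 2`.
-/

open scoped ENNReal

namespace lp

variable {α 𝕜 : Type*} {E : α → Type*} [NormedField 𝕜] [∀ i, NormedAddCommGroup (E i)]
  [∀ i, NormedSpace 𝕜 (E i)] {p : ℝ≥0∞} {w : α → 𝕜}

theorem norm_smul_apply_le (hw : ∀ i, ‖w i‖ ≤ 1) (a : lp E p) (i : α) : ‖w i • a i‖ ≤ ‖a i‖ := by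
  rw [norm_smul]; exact mul_le_of_le_one_left (norm_nonneg _) (hw i)

theorem memℓp_smul_of_norm_le_one (hw : ∀ i, ‖w i‖ ≤ 1) (a : lp E p) :
    Memℓp (fun i => w i • a i) p :=
  (lp.memℓp a).mono' (norm_smul_apply_le hw a)

variable (p) in
def diagonalₗ (w : α → 𝕜) (hw : ∀ i, ‖w i‖ ≤ 1) : lp E p →ₗ[𝕜] lp E p where
  toFun a := ⟨fun i => w i • a i, memℓp_smul_of_norm_le_one hw a⟩
  map_add' a b := lp.ext <| funext fun i => smul_add (w i) (a i) (b i)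
  map_smul' c a := lp.ext <| funext fun i => smul_comm (w i) c (a i)

variable {hw : ∀ i, ‖w i‖ ≤ 1}

@[simp]
theorem diagonalₗ_apply (a : lp E p) (i : α) : diagonalₗ p w hw a i = w i • a i := rfl

theorem diagonalₗ_injective (hw0 : ∀ i, w i ≠ 0) : Function.Injective (diagonalₗ (E := E) p w hw) :=
  fun a b hab => lp.ext <| funext fun i => by
    simpa [hw0 i] using congrArg (fun c : lp E p => c i) hab

theorem norm_diagonalₗ_apply_le (hp : p ≠ 0) (a : lp E p) : ‖diagonalₗ p w hw a‖ ≤ ‖a‖ :=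
  lp.norm_mono hp (norm_smul_apply_le hw a)

theorem diagonalₗ_single [DecidableEq α] (i : α) (x : E i) :
    diagonalₗ p w hw (lp.single p i x) = w i • lp.single p i x := by
  ext j
  by_cases h : j = i
  · subst h; simp
  · simp [Pi.single_eq_of_ne h]

end lp

namespace ContinuousLinearMap

variable {𝕜 V X : Type*} [NontriviallyNormedField 𝕜] [SeminormedAddCommGroup V] [NormedSpace 𝕜 V]
  [SeminormedAddCommGroup X] [NormedSpace 𝕜 X]

theorem one_lt_opNorm_of_norm_le_norm_apply_smul (S : V →L[𝕜] X) {w : 𝕜} (hw : ‖w‖ < 1)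
    {e : V} (he : 0 < ‖e‖) (hSe : ‖e‖ ≤ ‖S (w • e)‖) : 1 < ‖S‖ := by
  by_contra! hS
  have : ‖e‖ ≤ ‖w‖ * ‖e‖ := calc
    ‖e‖ ≤ ‖w‖ * ‖S e‖ := by rwa [map_smul, norm_smul] at hSe
    _ ≤ ‖w‖ * (‖S‖ * ‖e‖) := by gcongr; exact S.le_opNorm e
    _ ≤ ‖w‖ * ‖e‖ := by gcongr; exact mul_le_of_le_one_left (norm_nonneg _) hS
  nlinarith [norm_nonneg w]

end ContinuousLinearMap

/-- In any category with operator spaces as objects and completely contractive maps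
as morphisms, the only injective object is `{0}`: for every nonzero complex normed
space `X` there are a contractive injective linear map `g : ℓ¹ → ℓ¹`
(explicitly `(g a) n = a n / (n+1)`) and a contractive map `T : ℓ¹ → X` admitting
no contractive extension `S` along `g`. -/
theorem no_nonzero_injective_opsp
    (X : Type*) [NormedAddCommGroup X] [NormedSpace ℂ X]
    (hX : ∃ x : X, x ≠ 0) :
    ∃ g : lp (fun _ : ℕ => ℂ) 1 →ₗ[ℂ] lp (fun _ : ℕ => ℂ) 1,
      (∀ (a : lp (fun _ : ℕ => ℂ) 1) (n : ℕ), (g a : ∀ _ : ℕ, ℂ) n = a n / (n + 1)) ∧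
      Function.Injective g ∧ (∀ a, ‖g a‖ ≤ ‖a‖) ∧
      ∃ T : lp (fun _ : ℕ => ℂ) 1 →L[ℂ] X, ‖T‖ ≤ 1 ∧
        ¬ ∃ S : lp (fun _ : ℕ => ℂ) 1 →L[ℂ] X, ‖S‖ ≤ 1 ∧ ∀ a, S (g a) = T a := by
  have hw : ∀ n : ℕ, ‖((n : ℂ) + 1)⁻¹‖ ≤ 1 := fun n => by
    rw [norm_inv, ← Nat.cast_add_one, Complex.norm_natCast]
    exact inv_le_one_of_one_le₀ (by simp)
  set g := lp.diagonalₗ (E := fun _ : ℕ => ℂ) 1 (fun n : ℕ => ((n : ℂ) + 1)⁻¹) hw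
  refine ⟨g, fun a n => by simp [g, div_eq_inv_mul],
    lp.diagonalₗ_injective fun n => inv_ne_zero (Nat.cast_add_one_ne_zero n),
    lp.norm_diagonalₗ_apply_le one_ne_zero, ?_⟩
  have : Nontrivial X := let ⟨x, hx⟩ := hX; nontrivial_of_ne x 0 hx
  obtain ⟨x, hx⟩ := exists_norm_eq X zero_le_one
  set T := (lp.evalCLM ℂ (fun _ : ℕ => ℂ) 1 1).smulRight x
  have hT : ‖T‖ ≤ 1 := by
    rw [ContinuousLinearMap.norm_smulRight_apply, hx, mul_one]
    exact LinearMap.mkContinuous_norm_le _ zero_le_one _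
  refine ⟨T, hT, fun ⟨S, hS, hST⟩ => hS.not_gt ?_⟩
  set e : lp (fun _ : ℕ => ℂ) 1 := lp.single 1 1 1
  have he : ‖e‖ = 1 := by simp [e, lp.norm_single]
  have hge : g e = ((1 : ℕ) + 1 : ℂ)⁻¹ • e := lp.diagonalₗ_single 1 1
  have hTe : T e = x := by simp [T, e, lp.evalCLM]
  refine S.one_lt_opNorm_of_norm_le_norm_apply_smul (w := ((1 : ℕ) + 1 : ℂ)⁻¹) (by norm_num)
    (he ▸ one_pos) ?_
  rw [← hge, hST, hTe, hx, he]
end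

section
/- Let c = C(OnePoint ℕ, ℂ) be the unital commutative C*-algebra of continuous complex-valued functions on the one-point compactification of ℕ, let φ : c → c be defined by φ(a) = (a + a(∞)·1)/2, and let π₁ : c → ℂ be evaluation at the point 0 ∈ ℕ ⊆ OnePoint ℕ. Then there is no ℂ-linear map u : c → ℂ which is unital (u(1) = 1) and positive (if a(t) is a nonnegative real for all t, then u(a) is a nonnegative real) such that u ∘ φ = π₁. -/
open OnePoint
open scoped OnePoint ComplexOrder

/-!
Unitality and `u ∘ φ = π₁` force `u a = 2 a(0) - a(∞)` for every `a`. The sequence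
`0, 1, 1, …` (with limit `1`) is positive but would get `u`-value `-1`.
-/

theorem LinearMap.apply_eq_two_mul_sub_of_apply_average_eq {X : Type*} [TopologicalSpace X]
    {u : C(X, ℂ) →ₗ[ℂ] ℂ} {x y : X} (hu1 : u 1 = 1)
    (hfac : ∀ a : C(X, ℂ), u ((2 : ℂ)⁻¹ • (a + a y • (1 : C(X, ℂ)))) = a x) (a : C(X, ℂ)) :
    u a = 2 * a x - a y := by
  have h := hfac a
  rw [u.map_smul, map_add, u.map_smul, hu1, smul_eq_mul, smul_eq_mul, mul_one] at h
  linear_combination 2 * h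

namespace OnePoint

noncomputable def zeroThenOne : C(OnePoint ℕ, ℂ) :=
  continuousMapMkNat (fun n => if n = 0 then 0 else 1) 1 <|
    tendsto_const_nhds.congr' <| by
      filter_upwards [Filter.eventually_ne_atTop 0] with n hn
      simp [hn]

@[simp]
theorem zeroThenOne_coe (n : ℕ) : zeroThenOne n = if n = 0 then 0 else 1 := rfl

@[simp]
theorem zeroThenOne_infty : zeroThenOne ∞ = 1 := rfl

theorem zeroThenOne_nonneg (t : OnePoint ℕ) : 0 ≤ zeroThenOne t := by
  induction t using OnePoint.rec with
  | infty => simp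
  | coe n => rw [zeroThenOne_coe]; split_ifs <;> simp

end OnePoint

/-- There is no unital positive linear functional `u` on the C*-algebra
`c = C(OnePoint ℕ, ℂ)` of convergent complex sequences satisfying
`u ∘ φ = π₁`, where `φ a = (a + a(∞)·1)/2` and `π₁` is evaluation at `0`. -/
theorem no_unital_positive_functional_factoring :
    ¬ ∃ u : C(OnePoint ℕ, ℂ) →ₗ[ℂ] ℂ,
        u 1 = 1 ∧
        (∀ a : C(OnePoint ℕ, ℂ), (∀ t : OnePoint ℕ, 0 ≤ a t) → 0 ≤ u a) ∧
        (∀ a : C(OnePoint ℕ, ℂ),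
          u ((2 : ℂ)⁻¹ • (a + a ∞ • (1 : C(OnePoint ℕ, ℂ)))) = a ((0 : ℕ) : OnePoint ℕ)) := by
  rintro ⟨u, hu1, hpos, hfac⟩
  have hu : u zeroThenOne = -1 := by
    rw [u.apply_eq_two_mul_sub_of_apply_average_eq hu1 hfac]
    norm_num
  have := hpos zeroThenOne zeroThenOne_nonneg
  rw [hu] at this
  norm_num [Complex.le_def] at this
end

section
/- Let A be a nontrivial unital complex C*-algebra, let c = C(OnePoint ℕ, ℂ) be the unital commutative C*-algebra of continuous complex-valued functions on the one-point compactification of ℕ, let φ : c → c be defined by φ(a) = (a + a(∞)·1)/2, and define T : c → A by T(a) = a(0)·1. Then T is a unital ℂ-linear map which is positive (if a(t) is a nonnegative real for all t, then 0 ≤ T(a) in the C*-order of A), and there is no ℂ-linear map S : c → A which is unital (S(1) = 1) and positive (if a(t) is a nonnegative real for all t, then 0 ≤ S(a) in the C*-order of A) such that S ∘ φ = T. -/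
open OnePoint
open scoped OnePoint ComplexOrder

/-! The indicator `e` of the point `0` is continuous on `OnePoint ℕ`, satisfies `e ≤ 1` and is
mapped by `φ` to `e / 2`, since `e(∞) = 0`. A unital positive `S` with `S ∘ φ = T` would
therefore send `e` to `2 • T e = 2`, while positivity of `S (1 - e)` forces `S e ≤ 1`; in a
nontrivial star-ordered ring `2 ≤ 1` is impossible. -/

namespace OnePoint

variable {X : Type*} [TopologicalSpace X] [DiscreteTopology X]

theorem isClopen_singleton_coe (x : X) : IsClopen ({(x : OnePoint X)} : Set (OnePoint X)) := by
  rw [← Set.image_singleton]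
  exact ⟨isClosed_image_coe.2 ⟨isClosed_discrete _, isCompact_singleton⟩,
    isOpen_image_coe.2 (isOpen_discrete _)⟩

noncomputable def coeIndicator (x : X) : C(OnePoint X, ℂ) :=
  ⟨Set.indicator {(x : OnePoint X)} 1, (isClopen_singleton_coe x).continuous_indicator
    continuous_const⟩

@[simp]
theorem coeIndicator_infty (x : X) : coeIndicator x ∞ = 0 := by
  simp [coeIndicator]

@[simp]
theorem coeIndicator_coe_self (x : X) : coeIndicator x x = 1 :=
  Set.indicator_of_mem rfl _

theorem coeIndicator_le_one (x : X) : coeIndicator x ≤ 1 := fun t => by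
  by_cases ht : t = x <;> simp [coeIndicator, ht]

end OnePoint

theorem StarOrderedRing.not_two_le_one {R : Type*} [Ring R] [PartialOrder R] [StarRing R]
    [StarOrderedRing R] [Nontrivial R] : ¬ (2 : R) ≤ 1 := fun h =>
  (zero_lt_one (α := R)).not_ge <| by
    simpa [← one_add_one_eq_two] using h

theorem map_le_one_of_le_one {M A F : Type*} [AddCommGroup M] [One M] [PartialOrder M]
    [IsOrderedAddMonoid M] [AddCommGroup A] [One A] [PartialOrder A] [IsOrderedAddMonoid A]
    [FunLike F M A] [AddMonoidHomClass F M A] (S : F) (hS1 : S 1 = 1)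
    (hS : ∀ a, 0 ≤ a → 0 ≤ S a) {e : M} (he : e ≤ 1) : S e ≤ 1 :=
  sub_nonneg.mp <| by simpa [hS1] using hS (1 - e) (sub_nonneg.mpr he)

theorem cstar_algebra_not_injective_opsy_general
    (A : Type*) [NormedRing A] [StarRing A] [NormedAlgebra ℂ A]
    [StarModule ℂ A] [PartialOrder A] [StarOrderedRing A]
    [Nontrivial A] :
    let T : C(OnePoint ℕ, ℂ) → A := fun a => a ((0 : ℕ) : OnePoint ℕ) • (1 : A)
    T 1 = 1 ∧
    (∀ a b : C(OnePoint ℕ, ℂ), T (a + b) = T a + T b) ∧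
    (∀ (z : ℂ) (a : C(OnePoint ℕ, ℂ)), T (z • a) = z • T a) ∧
    (∀ a : C(OnePoint ℕ, ℂ), (∀ t : OnePoint ℕ, 0 ≤ a t) → 0 ≤ T a) ∧
    ¬ ∃ S : C(OnePoint ℕ, ℂ) →ₗ[ℂ] A,
        S 1 = 1 ∧
        (∀ a : C(OnePoint ℕ, ℂ), (∀ t : OnePoint ℕ, 0 ≤ a t) → 0 ≤ S a) ∧
        (∀ a : C(OnePoint ℕ, ℂ),
          S ((2 : ℂ)⁻¹ • (a + a ∞ • (1 : C(OnePoint ℕ, ℂ)))) = T a) := by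
  intro T
  refine ⟨by simp [T], fun a b => by simp [T, add_smul], fun z a => by simp [T, smul_smul],
    fun a ha => smul_nonneg (ha _) zero_le_one, ?_⟩
  rintro ⟨S, hS1, hSpos, hSφ⟩
  have hSe : S (coeIndicator 0) = 2 := by
    have h := hSφ (coeIndicator 0)
    simp only [T, coeIndicator_infty, coeIndicator_coe_self, zero_smul, add_zero, one_smul] at h
    rw [← smul_inv_smul₀ (two_ne_zero (α := ℂ)) (S _), ← _root_.map_smul, h, two_smul,
      one_add_one_eq_two]
  have hSe_le : S (coeIndicator 0) ≤ 1 := map_le_one_of_le_one S hS1 hSpos (coeIndicator_le_one 0)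
  exact StarOrderedRing.not_two_le_one (hSe ▸ hSe_le)

/-- No nontrivial unital complex C*-algebra is injective in the category of
operator systems and unital positive linear maps: the unital positive map
`T : c → A`, `T a = a(0)·1`, on the algebra `c = C(OnePoint ℕ, ℂ)` of convergent
sequences admits no unital positive linear extension `S` along the unital
injective positive map `φ a = (a + a(∞)·1)/2`. -/
theorem cstar_algebra_not_injective_opsy
    (A : Type*) [NormedRing A] [StarRing A] [CStarRing A] [NormedAlgebra ℂ A]
    [CompleteSpace A] [StarModule ℂ A] [PartialOrder A] [StarOrderedRing A]
    [Nontrivial A] :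
    let T : C(OnePoint ℕ, ℂ) → A := fun a => a ((0 : ℕ) : OnePoint ℕ) • (1 : A)
    T 1 = 1 ∧
    (∀ a b : C(OnePoint ℕ, ℂ), T (a + b) = T a + T b) ∧
    (∀ (z : ℂ) (a : C(OnePoint ℕ, ℂ)), T (z • a) = z • T a) ∧
    (∀ a : C(OnePoint ℕ, ℂ), (∀ t : OnePoint ℕ, 0 ≤ a t) → 0 ≤ T a) ∧
    ¬ ∃ S : C(OnePoint ℕ, ℂ) →ₗ[ℂ] A,
        S 1 = 1 ∧
        (∀ a : C(OnePoint ℕ, ℂ), (∀ t : OnePoint ℕ, 0 ≤ a t) → 0 ≤ S a) ∧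
        (∀ a : C(OnePoint ℕ, ℂ),
          S ((2 : ℂ)⁻¹ • (a + a ∞ • (1 : C(OnePoint ℕ, ℂ)))) = T a) :=
  cstar_algebra_not_injective_opsy_general A
end

section
/- For each integer n ≥ 1, define jₙ : ℂ → ℂ × ℂ, where ℂ × ℂ carries the supremum norm ‖(z, w)‖ = max(|z|, |w|), by jₙ(z) = (−z, −(1 − 1/n)·z). Then: (i) jₙ is an isometric ℂ-linear map; (ii) every element of ℂ × ℂ can be written as λ·(1,1) + jₙ(z) for some λ, z ∈ ℂ (i.e., ℂ·(1,1) + jₙ(ℂ) = ℂ × ℂ); and (iii) ‖(1,1) + jₙ(1)‖ = 1/n. -/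
theorem norm_prod_mk_self_mul_of_norm_le_one {R : Type*} [SeminormedRing R] {c : R}
    (hc : ‖c‖ ≤ 1) (z : R) : ‖(z, c * z)‖ = ‖z‖ :=
  max_eq_left <| (norm_mul_le c z).trans (mul_le_of_le_one_left (norm_nonneg z) hc)

theorem norm_one_sub_one_div_natCast_le_one {𝕜 : Type*} [RCLike 𝕜] (n : ℕ) :
    ‖1 - 1 / (n : 𝕜)‖ ≤ 1 := by
  have hcast : (1 - 1 / (n : 𝕜)) = ((1 - 1 / (n : ℝ) : ℝ) : 𝕜) := by push_cast; ring
  have hinv : 1 / (n : ℝ) ≤ 1 := by simpa only [one_div] using Nat.cast_inv_le_one n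
  rw [hcast, RCLike.norm_ofReal, abs_le]
  constructor <;> linarith [show 0 ≤ 1 / (n : ℝ) by positivity]

theorem exists_smul_one_one_add_neg_mk_mul {K : Type*} [Field K] {c : K} (hc : c ≠ 1)
    (v : K × K) : ∃ l z : K, v = l • ((1, 1) : K × K) + (-z, -(c * z)) := by
  have h : 1 - c ≠ 0 := sub_ne_zero.mpr hc.symm
  refine ⟨v.1 + (v.2 - v.1) / (1 - c), (v.2 - v.1) / (1 - c), Prod.ext ?_ ?_⟩
  · simp
  · simp only [Prod.snd_add, Prod.smul_snd, smul_eq_mul, mul_one]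
    field_simp
    ring

/-- There is no smallest unitization of an operator space: for each `n ≥ 1`, the
map `jₙ : ℂ → ℂ × ℂ` (sup norm), `jₙ z = (−z, −(1 − 1/n) z)`, is an isometric
ℂ-linear embedding with `ℂ·(1,1) + jₙ(ℂ) = ℂ × ℂ` (so `ℂ × ℂ` is a unitization of
`ℂ` with unit `(1,1)`), yet `‖(1,1) + jₙ(1)‖ = 1/n`. -/
theorem no_smallest_unitization (n : ℕ) (hn : 1 ≤ n) :
    let j : ℂ → ℂ × ℂ := fun z => (-z, -((1 - 1 / (n : ℂ)) * z))
    (∀ z w : ℂ, j (z + w) = j z + j w) ∧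
    (∀ (c z : ℂ), j (c * z) = c • j z) ∧
    (∀ z : ℂ, ‖j z‖ = ‖z‖) ∧
    (∀ v : ℂ × ℂ, ∃ l z : ℂ, v = l • ((1, 1) : ℂ × ℂ) + j z) ∧
    ‖((1, 1) : ℂ × ℂ) + j 1‖ = 1 / (n : ℝ) := by
  intro j
  have hc : 1 - 1 / (n : ℂ) ≠ 1 := by
    simp only [one_div, ne_eq, sub_eq_self, inv_eq_zero, Nat.cast_eq_zero]; omega
  refine ⟨fun z w => Prod.ext (neg_add z w) (by simp only [j, Prod.snd_add]; ring),
    fun c z => Prod.ext (mul_neg c z).symm (by simp only [j, Prod.smul_snd, smul_eq_mul]; ring),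
    fun z => ?_, exists_smul_one_one_add_neg_mk_mul hc, ?_⟩
  · rw [← norm_neg, show -j z = (z, (1 - 1 / (n : ℂ)) * z) by simp [j]]
    exact norm_prod_mk_self_mul_of_norm_le_one (norm_one_sub_one_div_natCast_le_one n) z
  · have hunit : ((1, 1) : ℂ × ℂ) + j 1 = (0, 1 / (n : ℂ)) := Prod.ext (by simp [j]) (by simp [j])
    simp [hunit]
end
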